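/- Let S ⊂ ℝ, let A ∈ ℝ^{d×d} be symmetric, and let Â = A + H be a symmetric perturbation of A. Let Q, Q̂ ∈ ℝ^{d×k} be matrices with orthonormal columns whose column spaces equal, respectively, the span of the eigenvectors of A with eigenvalues in S and the span of the eigenvectors of Â with eigenvalues in S (both of dimension k). Set δ = min{ |λ − s| : λ an eigenvalue of A with λ ∉ S, s ∈ S }, and assume δ > 0. Then there exists an orthogonal matrix O ∈ ℝ^{k×k} such that ‖Q̂ − Q O‖_F ≤ √(2k) · ‖H‖_op / δ. -/

import Mathlib

open Matrix

/-- Squared Frobenius norm of a real matrix: sum of squares of entries. -/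
noncomputable def frobSq {m n : ℕ} (M : Matrix (Fin m) (Fin n) ℝ) : ℝ :=
  ∑ i, ∑ j, (M i j) ^ 2

/-- Spectral (operator) norm of a real matrix. -/
noncomputable def opNorm {m n : ℕ} (M : Matrix (Fin m) (Fin n) ℝ) : ℝ :=
  ‖LinearMap.toContinuousLinearMap (Matrix.toEuclideanLin M)‖

/-!
Let `P = QQᵀ`, the orthogonal projection onto the `S`-eigenspaces of `A`, and `M = Q̂ᵀ Â Q̂`.
Since the range of `Q̂` is `Â`-invariant, `Â Q̂ = Q̂ M`, and every eigenvalue of `M` lies in `S`.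
In an orthonormal eigenbasis `W` of `A` the matrix `R = Wᵀ Q̂` therefore solves the Sylvester
equation `R M - Λ R = Wᵀ H Q̂`; on the rows with `λᵢ ∉ S` the operator `M - λᵢ` is bounded below
by `δ`, whence `δ ‖(1 - P) Q̂‖_F ≤ ‖H Q̂‖_F ≤ √k ‖H‖_op`.

For the rotation take the orthogonal polar factor `O` of `B = Qᵀ Q̂`. The singular values `σⱼ`
of `B` lie in `[0, 1]`, so `‖Q̂ - Q O‖_F² = 2k - 2 ∑ σⱼ ≤ 2k - 2 ∑ σⱼ² = 2 ‖(1 - P) Q̂‖_F²`.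
-/

section Frobenius

variable {m n p : ℕ}

theorem frobSq_eq_sum_dotProduct (M : Matrix (Fin m) (Fin n) ℝ) :
    frobSq M = ∑ i, M i ⬝ᵥ M i := by
  simp only [frobSq, dotProduct, sq]

theorem frobSq_eq_trace (M : Matrix (Fin m) (Fin n) ℝ) : frobSq M = (Mᵀ * M).trace := by
  rw [frobSq, Finset.sum_comm]
  simp only [trace, diag, mul_apply, transpose_apply, sq]

theorem frobSq_transpose (M : Matrix (Fin m) (Fin n) ℝ) : frobSq Mᵀ = frobSq M :=
  Finset.sum_comm

theorem frobSq_mul_of_transpose_mul_self {U : Matrix (Fin p) (Fin m) ℝ} (hU : Uᵀ * U = 1)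
    (M : Matrix (Fin m) (Fin n) ℝ) : frobSq (U * M) = frobSq M := by
  rw [frobSq_eq_trace, frobSq_eq_trace, transpose_mul, Matrix.mul_assoc, ← Matrix.mul_assoc Uᵀ,
    hU, Matrix.one_mul]

theorem frobSq_sub_of_transpose_mul_self {X Y : Matrix (Fin m) (Fin n) ℝ} (hX : Xᵀ * X = 1)
    (hY : Yᵀ * Y = 1) : frobSq (X - Y) = 2 * n - 2 * (Xᵀ * Y).trace := by
  have hYX : (Yᵀ * X).trace = (Xᵀ * Y).trace := by
    rw [← trace_transpose, transpose_mul, transpose_transpose]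
  rw [frobSq_eq_trace, transpose_sub, Matrix.sub_mul, Matrix.mul_sub, Matrix.mul_sub, hX, hY,
    trace_sub, trace_sub, trace_sub, hYX, trace_one, Fintype.card_fin]
  ring

theorem opNorm_nonneg (M : Matrix (Fin m) (Fin n) ℝ) : 0 ≤ opNorm M :=
  norm_nonneg _

theorem dotProduct_self_mulVec_le_opNorm (H : Matrix (Fin m) (Fin p) ℝ) (v : Fin p → ℝ) :
    (H *ᵥ v) ⬝ᵥ (H *ᵥ v) ≤ opNorm H ^ 2 * (v ⬝ᵥ v) := by
  have hnorm : ∀ {q : ℕ} (w : Fin q → ℝ), ‖WithLp.toLp 2 w‖ ^ 2 = w ⬝ᵥ w := fun w => by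
    rw [EuclideanSpace.real_norm_sq_eq]
    simp [dotProduct, sq]
  rw [← hnorm, ← hnorm, ← mul_pow]
  exact pow_le_pow_left₀ (norm_nonneg _)
    ((LinearMap.toContinuousLinearMap (toEuclideanLin H)).le_opNorm (WithLp.toLp 2 v)) 2

theorem frobSq_mul_le_of_transpose_mul_self (H : Matrix (Fin m) (Fin p) ℝ)
    {X : Matrix (Fin p) (Fin n) ℝ} (hX : Xᵀ * X = 1) : frobSq (H * X) ≤ n * opNorm H ^ 2 := by
  have hcol : ∀ j, (H * X)ᵀ j = H *ᵥ Xᵀ j := fun j => by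
    ext i
    simp only [transpose_apply, mul_apply, mulVec, dotProduct]
  have hunit : ∀ j, Xᵀ j ⬝ᵥ Xᵀ j = 1 := fun j => by
    simpa [mul_apply, dotProduct] using congrFun (congrFun hX j) j
  rw [← frobSq_transpose, frobSq_eq_sum_dotProduct]
  calc ∑ j, (H * X)ᵀ j ⬝ᵥ (H * X)ᵀ j ≤ ∑ _j : Fin n, opNorm H ^ 2 :=
        Finset.sum_le_sum fun j _ => by
          simpa [hcol, hunit] using dotProduct_self_mulVec_le_opNorm H (Xᵀ j)
    _ = n * opNorm H ^ 2 := by simp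

end Frobenius

section Orthonormal

variable {m n : Type*} [Fintype m] [Fintype n]

theorem dotProduct_mulVec_mulVec (M : Matrix m n ℝ) (x y : n → ℝ) :
    (M *ᵥ x) ⬝ᵥ (M *ᵥ y) = x ⬝ᵥ ((Mᵀ * M) *ᵥ y) := by
  rw [dotProduct_mulVec x, ← vecMul_vecMul, vecMul_transpose, ← dotProduct_mulVec]

variable [DecidableEq n]

theorem dotProduct_self_mulVec_of_transpose_mul_self {W : Matrix m n ℝ} (hW : Wᵀ * W = 1)
    (x : n → ℝ) : (W *ᵥ x) ⬝ᵥ (W *ᵥ x) = x ⬝ᵥ x := by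
  rw [dotProduct_mulVec_mulVec, hW, one_mulVec]

theorem dotProduct_self_transpose_mulVec_le {Q : Matrix m n ℝ} (hQ : Qᵀ * Q = 1) (y : m → ℝ) :
    (Qᵀ *ᵥ y) ⬝ᵥ (Qᵀ *ᵥ y) ≤ y ⬝ᵥ y := by
  set z := Qᵀ *ᵥ y
  have hyz : y ⬝ᵥ (Q *ᵥ z) = z ⬝ᵥ z := by rw [dotProduct_mulVec, ← mulVec_transpose]
  have h := dotProduct_self_star_nonneg (y - Q *ᵥ z)
  simp only [star_trivial, sub_dotProduct, dotProduct_sub, dotProduct_comm (Q *ᵥ z) y, hyz,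
    dotProduct_self_mulVec_of_transpose_mul_self hQ z] at h
  linarith

theorem transpose_row_dotProduct_of_transpose_mul_self {U : Matrix n n ℝ} (hU : Uᵀ * U = 1)
    (i j : n) : Uᵀ i ⬝ᵥ Uᵀ j = if i = j then 1 else 0 := by
  rw [← one_apply, ← hU, mul_apply']
  rfl

end Orthonormal

section Spectral

variable {n : Type*} [Fintype n] [DecidableEq n]

theorem Matrix.IsSymm.exists_orthogonal_mul_eq_mul_diagonal {A : Matrix n n ℝ} (hA : A.IsSymm) :
    ∃ (W : Matrix n n ℝ) (lam : n → ℝ), Wᵀ * W = 1 ∧ W * Wᵀ = 1 ∧ A * W = W * diagonal lam := by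
  have hH : A.IsHermitian := by
    rwa [IsHermitian, conjTranspose_eq_transpose_of_trivial]
  set W : Matrix n n ℝ := (hH.eigenvectorUnitary : Matrix n n ℝ)
  have hstar : star W = Wᵀ := by rw [star_eq_conjTranspose, conjTranspose_eq_transpose_of_trivial]
  refine ⟨W, hH.eigenvalues, ?_, ?_, ?_⟩
  · rw [← hstar]
    exact Matrix.mem_unitaryGroup_iff'.mp hH.eigenvectorUnitary.2
  · rw [← hstar]
    exact Matrix.mem_unitaryGroup_iff.mp hH.eigenvectorUnitary.2
  · ext i j
    rw [mul_diagonal]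
    simpa [mul_apply, mulVec, dotProduct, W, mul_comm] using
      congrFun (hH.mulVec_eigenvectorBasis j) i

variable {A W : Matrix n n ℝ} {lam : n → ℝ}

theorem mulVec_transpose_apply_of_mul_eq_mul_diagonal (hAW : A * W = W * diagonal lam) (j : n) :
    A *ᵥ Wᵀ j = lam j • Wᵀ j := by
  ext i
  have := congrFun (congrFun hAW i) j
  rw [mul_diagonal] at this
  simpa [mul_apply, mulVec, dotProduct, mul_comm] using this

theorem hasEigenvalue_of_mul_eq_mul_diagonal (hW : Wᵀ * W = 1)
    (hAW : A * W = W * diagonal lam) (j : n) :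
    Module.End.HasEigenvalue (mulVecLin A) (lam j) := by
  have hcol : Wᵀ j ≠ 0 := fun h => by
    simpa [h] using transpose_row_dotProduct_of_transpose_mul_self hW j j
  exact Module.End.hasEigenvalue_of_hasEigenvector
    ⟨Module.End.mem_eigenspace_iff.2 (mulVec_transpose_apply_of_mul_eq_mul_diagonal hAW j), hcol⟩

theorem transpose_mul_eq_diagonal_mul_transpose (hW : Wᵀ * W = 1) (hW' : W * Wᵀ = 1)
    (hAW : A * W = W * diagonal lam) : Wᵀ * A = diagonal lam * Wᵀ :=
  calc Wᵀ * A = Wᵀ * (A * W) * Wᵀ := by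
        rw [Matrix.mul_assoc, Matrix.mul_assoc, hW', Matrix.mul_one]
    _ = diagonal lam * Wᵀ := by rw [hAW, ← Matrix.mul_assoc, hW, Matrix.one_mul]

theorem sq_mul_dotProduct_self_le_of_eigenvalue_gap {M : Matrix n n ℝ} (hM : M.IsSymm)
    {S : Set ℝ} (hMS : ∀ μ, Module.End.HasEigenvalue (mulVecLin M) μ → μ ∈ S) {c δ : ℝ}
    (hδ : 0 ≤ δ) (hgap : ∀ s ∈ S, δ ≤ |c - s|) (x : n → ℝ) :
    δ ^ 2 * (x ⬝ᵥ x) ≤ (M *ᵥ x - c • x) ⬝ᵥ (M *ᵥ x - c • x) := by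
  obtain ⟨V, m, hV, hV', hMV⟩ := hM.exists_orthogonal_mul_eq_mul_diagonal
  set y := Vᵀ *ᵥ x
  have hx : x = V *ᵥ y := by rw [mulVec_mulVec, hV', one_mulVec]
  have hMx : M *ᵥ x - c • x = V *ᵥ fun j => (m j - c) * y j := by
    rw [hx, mulVec_mulVec, hMV, ← mulVec_mulVec, ← mulVec_smul, ← mulVec_sub]
    congr 1
    ext j
    simp only [Pi.sub_apply, Pi.smul_apply, mulVec_diagonal, smul_eq_mul]
    ring
  rw [hMx, dotProduct_self_mulVec_of_transpose_mul_self hV, hx,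
    dotProduct_self_mulVec_of_transpose_mul_self hV, dotProduct, dotProduct, Finset.mul_sum]
  refine Finset.sum_le_sum fun j _ => ?_
  have hj : δ ≤ |m j - c| := by
    rw [abs_sub_comm]
    exact hgap _ (hMS _ (hasEigenvalue_of_mul_eq_mul_diagonal hV hMV j))
  have : δ ^ 2 ≤ (m j - c) ^ 2 := by
    rw [← sq_abs (m j - c)]
    exact pow_le_pow_left₀ hδ hj 2
  nlinarith [mul_self_nonneg (y j)]

end Spectral

section SpectralSubspace

variable {n ι : Type*} [Fintype n] [Fintype ι] [DecidableEq ι]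

theorem eq_of_isSymm_of_mul_eq {P P' : Matrix n n ℝ} (hP : P.IsSymm) (hP' : P'.IsSymm)
    (h : P * P' = P') (h' : P' * P = P) : P = P' :=
  calc P = (P' * P)ᵀ := by rw [h', hP.eq]
    _ = P' := by rw [transpose_mul, hP.eq, hP'.eq, h]

theorem mul_transpose_mulVec_of_mem_range {Q : Matrix n ι ℝ} (hQ : Qᵀ * Q = 1) {v : n → ℝ}
    (hv : v ∈ LinearMap.range (mulVecLin Q)) : (Q * Qᵀ) *ᵥ v = v := by
  obtain ⟨x, rfl⟩ := hv
  rw [mulVecLin_apply, mulVec_mulVec, Matrix.mul_assoc, hQ, Matrix.mul_one]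

theorem mulVec_mem_iSup_eigenspace {A : Matrix n n ℝ} {S : Set ℝ} {v : n → ℝ}
    (hv : v ∈ ⨆ μ ∈ S, Module.End.eigenspace (mulVecLin A) μ) :
    A *ᵥ v ∈ ⨆ μ ∈ S, Module.End.eigenspace (mulVecLin A) μ := by
  have hle : (⨆ μ ∈ S, Module.End.eigenspace (mulVecLin A) μ) ≤
      (⨆ μ ∈ S, Module.End.eigenspace (mulVecLin A) μ).comap (mulVecLin A) :=
    iSup₂_le fun μ hμ w hw => by
      rw [Submodule.mem_comap, Module.End.mem_eigenspace_iff.1 hw]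
      exact Submodule.smul_mem _ _
        (Submodule.mem_iSup_of_mem μ (Submodule.mem_iSup_of_mem hμ hw))
  exact hle hv

variable {A : Matrix n n ℝ} {S : Set ℝ} {Q : Matrix n ι ℝ}

theorem mul_eq_mul_transpose_mul_mul_of_range_eq (hQ : Qᵀ * Q = 1)
    (hQS : LinearMap.range (mulVecLin Q) = ⨆ μ ∈ S, Module.End.eigenspace (mulVecLin A) μ) :
    A * Q = Q * (Qᵀ * A * Q) := by
  refine ext_iff_mulVec.2 fun x => ?_
  have hAQx : A *ᵥ (Q *ᵥ x) ∈ LinearMap.range (mulVecLin Q) :=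
    hQS ▸ mulVec_mem_iSup_eigenspace (hQS ▸ LinearMap.mem_range_self (mulVecLin Q) x)
  rw [← mulVec_mulVec, ← mul_transpose_mulVec_of_mem_range hQ hAQx]
  simp only [mulVec_mulVec, Matrix.mul_assoc]

theorem mem_of_hasEigenvalue_transpose_mul_mul (hQ : Qᵀ * Q = 1)
    (hQS : LinearMap.range (mulVecLin Q) = ⨆ μ ∈ S, Module.End.eigenspace (mulVecLin A) μ)
    {m : ℝ} (hm : Module.End.HasEigenvalue (mulVecLin (Qᵀ * A * Q)) m) : m ∈ S := by
  obtain ⟨x, hx, hx0⟩ := hm.exists_hasEigenvector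
  have hQx : A *ᵥ (Q *ᵥ x) = m • (Q *ᵥ x) := by
    rw [mulVec_mulVec, mul_eq_mul_transpose_mul_mul_of_range_eq hQ hQS, ← mulVec_mulVec,
      ← mulVecLin_apply (Qᵀ * A * Q), Module.End.mem_eigenspace_iff.1 hx, mulVec_smul]
  have hQx0 : Q *ᵥ x ≠ 0 := fun h => hx0 <| by
    rw [← one_mulVec x, ← hQ, ← mulVec_mulVec, h, mulVec_zero]
  by_contra hmS
  have hV : (⨆ μ ∈ S, Module.End.eigenspace (mulVecLin A) μ) ≤
      ⨆ μ, ⨆ (_ : μ ≠ m), Module.End.eigenspace (mulVecLin A) μ :=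
    iSup₂_le fun μ hμ => le_iSup₂_of_le μ (fun h => hmS (h ▸ hμ)) le_rfl
  refine hQx0 <| Submodule.disjoint_def.1 (Module.End.eigenspaces_iSupIndep (mulVecLin A) m) _
    (Module.End.mem_eigenspace_iff.2 hQx) (hV ?_)
  rw [← hQS]
  exact LinearMap.mem_range_self (mulVecLin Q) x

variable [DecidableEq n] {W : Matrix n n ℝ} {lam : n → ℝ}

theorem mulVec_mem_iSup_eigenspace_of_mul_eq_mul_diagonal (hAW : A * W = W * diagonal lam)
    (x : n → ℝ) : (W * diagonal (S.indicator 1 ∘ lam) * Wᵀ) *ᵥ x ∈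
      ⨆ μ ∈ S, Module.End.eigenspace (mulVecLin A) μ := by
  rw [← mulVec_mulVec, ← mulVec_mulVec, mulVec_eq_sum]
  refine Submodule.sum_mem _ fun j _ => ?_
  rw [op_smul_eq_smul, mulVec_diagonal, Function.comp_apply]
  by_cases hj : lam j ∈ S
  · exact Submodule.smul_mem _ _ (Submodule.mem_iSup_of_mem (lam j)
      (Submodule.mem_iSup_of_mem hj (Module.End.mem_eigenspace_iff.2
        (mulVec_transpose_apply_of_mul_eq_mul_diagonal hAW j))))
  · rw [Set.indicator_of_notMem hj, zero_mul, zero_smul]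
    exact Submodule.zero_mem _

theorem diagonal_indicator_mulVec_transpose_mulVec_of_mem_eigenspace (hW : Wᵀ * W = 1)
    (hW' : W * Wᵀ = 1) (hAW : A * W = W * diagonal lam) {μ : ℝ} (hμ : μ ∈ S) {v : n → ℝ}
    (hv : v ∈ Module.End.eigenspace (mulVecLin A) μ) :
    diagonal (S.indicator 1 ∘ lam) *ᵥ (Wᵀ *ᵥ v) = Wᵀ *ᵥ v := by
  have hAv : A *ᵥ v = μ • v := Module.End.mem_eigenspace_iff.1 hv
  ext j
  rw [mulVec_diagonal, Function.comp_apply]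
  by_cases hj : lam j ∈ S
  · rw [Set.indicator_of_mem hj, Pi.one_apply, one_mul]
  · have hcoord : lam j * (Wᵀ *ᵥ v) j = μ * (Wᵀ *ᵥ v) j := by
      have := congrArg (Wᵀ *ᵥ ·) hAv
      simp only [mulVec_mulVec, transpose_mul_eq_diagonal_mul_transpose hW hW' hAW] at this
      rw [← mulVec_mulVec, mulVec_smul] at this
      simpa only [mulVec_diagonal, Pi.smul_apply, smul_eq_mul] using congrFun this j
    have : (Wᵀ *ᵥ v) j = 0 :=
      (mul_eq_mul_right_iff.1 hcoord).resolve_left fun h => hj (h ▸ hμ)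
    rw [Set.indicator_of_notMem hj, this, mul_zero]

theorem mul_transpose_eq_of_range_eq (hW : Wᵀ * W = 1) (hW' : W * Wᵀ = 1)
    (hAW : A * W = W * diagonal lam) (hQ : Qᵀ * Q = 1)
    (hQS : LinearMap.range (mulVecLin Q) = ⨆ μ ∈ S, Module.End.eigenspace (mulVecLin A) μ) :
    Q * Qᵀ = W * diagonal (S.indicator 1 ∘ lam) * Wᵀ := by
  set P := W * diagonal (S.indicator 1 ∘ lam) * Wᵀ
  have hfix : (⨆ μ ∈ S, Module.End.eigenspace (mulVecLin A) μ) ≤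
      LinearMap.eqLocus (mulVecLin P) LinearMap.id :=
    iSup₂_le fun μ hμ v hv => by
      show P *ᵥ v = v
      rw [← mulVec_mulVec, ← mulVec_mulVec,
        diagonal_indicator_mulVec_transpose_mulVec_of_mem_eigenspace hW hW' hAW hμ hv,
        mulVec_mulVec, hW', one_mulVec]
  have hPsymm : P.IsSymm := by
    simp only [P, IsSymm, transpose_mul, transpose_transpose, diagonal_transpose, Matrix.mul_assoc]
  refine eq_of_isSymm_of_mul_eq ?_ hPsymm ?_ ?_
  · rw [IsSymm, transpose_mul, transpose_transpose]
  · refine ext_iff_mulVec.2 fun x => ?_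
    rw [← mulVec_mulVec]
    exact mul_transpose_mulVec_of_mem_range hQ
      (hQS ▸ mulVec_mem_iSup_eigenspace_of_mul_eq_mul_diagonal hAW x)
  · refine ext_iff_mulVec.2 fun x => ?_
    rw [← mulVec_mulVec]
    exact hfix (hQS ▸ ⟨Qᵀ *ᵥ x, by simp [mulVec_mulVec]⟩)

end SpectralSubspace

section SinTheta

variable {d k : ℕ} {S : Set ℝ} {M : Matrix (Fin k) (Fin k) ℝ} {δ : ℝ}

theorem sq_mul_frobSq_le_frobSq_mul_sub_diagonal_mul (hM : M.IsSymm)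
    (hMS : ∀ μ, Module.End.HasEigenvalue (mulVecLin M) μ → μ ∈ S) {lam : Fin d → ℝ}
    (hδ : 0 ≤ δ) (hgap : ∀ i, lam i ∉ S → ∀ s ∈ S, δ ≤ |lam i - s|)
    (R : Matrix (Fin d) (Fin k) ℝ) :
    δ ^ 2 * frobSq (diagonal (Sᶜ.indicator 1 ∘ lam) * R) ≤ frobSq (R * M - diagonal lam * R) := by
  rw [frobSq_eq_sum_dotProduct, frobSq_eq_sum_dotProduct, Finset.mul_sum]
  refine Finset.sum_le_sum fun i _ => ?_
  have hrow : (R * M - diagonal lam * R) i = M *ᵥ R i - lam i • R i := by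
    ext j
    rw [Matrix.sub_apply, diagonal_mul]
    simp only [Pi.sub_apply, Pi.smul_apply, smul_eq_mul, mul_apply, mulVec, dotProduct]
    congr 1
    exact Finset.sum_congr rfl fun l _ => by rw [hM.apply, mul_comm]
  have hdiag : (diagonal (Sᶜ.indicator 1 ∘ lam) * R : Matrix (Fin d) (Fin k) ℝ) i =
      Sᶜ.indicator (1 : ℝ → ℝ) (lam i) • R i := by
    ext j
    exact diagonal_mul _ _ _ _
  rw [hdiag, hrow]
  by_cases hi : lam i ∈ S
  · simp only [Set.indicator_of_notMem (Set.notMem_compl_iff.2 hi), zero_smul, dotProduct_zero,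
      mul_zero]
    simpa using dotProduct_self_star_nonneg (M *ᵥ R i - lam i • R i)
  · simpa [Set.indicator_of_mem (Set.mem_compl hi)] using
      sq_mul_dotProduct_self_le_of_eigenvalue_gap hM hMS hδ (hgap i hi) (R i)

theorem sq_mul_frobSq_one_sub_mul_transpose_mul_le {ι : Type*} [Fintype ι] [DecidableEq ι]
    {A : Matrix (Fin d) (Fin d) ℝ} (hA : A.IsSymm) {Q : Matrix (Fin d) ι ℝ} (hQ : Qᵀ * Q = 1)
    (hQS : LinearMap.range (mulVecLin Q) = ⨆ μ ∈ S, Module.End.eigenspace (mulVecLin A) μ)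
    (hM : M.IsSymm) (hMS : ∀ μ, Module.End.HasEigenvalue (mulVecLin M) μ → μ ∈ S)
    (hδ : 0 ≤ δ)
    (hgap : ∀ μ, Module.End.HasEigenvalue (mulVecLin A) μ → μ ∉ S → ∀ s ∈ S, δ ≤ |μ - s|)
    (X : Matrix (Fin d) (Fin k) ℝ) :
    δ ^ 2 * frobSq ((1 - Q * Qᵀ) * X) ≤ frobSq (X * M - A * X) := by
  obtain ⟨W, lam, hW, hW', hAW⟩ := hA.exists_orthogonal_mul_eq_mul_diagonal
  have hP : 1 - Q * Qᵀ = W * diagonal (Sᶜ.indicator 1 ∘ lam) * Wᵀ := by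
    have hcompl :
        diagonal (Sᶜ.indicator 1 ∘ lam) = 1 - diagonal (S.indicator (1 : ℝ → ℝ) ∘ lam) := by
      rw [← diagonal_one, diagonal_sub]
      congr 1
      ext i
      simp [Set.indicator_compl]
    rw [mul_transpose_eq_of_range_eq hW hW' hAW hQ hQS, hcompl, Matrix.mul_sub, Matrix.sub_mul,
      Matrix.mul_one, hW']
  have hWt : (Wᵀ)ᵀ * Wᵀ = 1 := by rw [transpose_transpose, hW']
  have hlhs : frobSq ((1 - Q * Qᵀ) * X) =
      frobSq (diagonal (Sᶜ.indicator 1 ∘ lam) * (Wᵀ * X)) := by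
    rw [hP, Matrix.mul_assoc, Matrix.mul_assoc]
    exact frobSq_mul_of_transpose_mul_self hW _
  have hrhs : frobSq (X * M - A * X) = frobSq (Wᵀ * X * M - diagonal lam * (Wᵀ * X)) := by
    rw [← frobSq_mul_of_transpose_mul_self hWt, Matrix.mul_sub, ← Matrix.mul_assoc,
      ← Matrix.mul_assoc Wᵀ A, transpose_mul_eq_diagonal_mul_transpose hW hW' hAW]
    simp only [Matrix.mul_assoc]
  rw [hlhs, hrhs]
  exact sq_mul_frobSq_le_frobSq_mul_sub_diagonal_mul hM hMS hδ
    (fun i => hgap _ (hasEigenvalue_of_mul_eq_mul_diagonal hW hAW i)) _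

end SinTheta

section Procrustes

variable {n : Type*} [Fintype n] [DecidableEq n]

theorem exists_orthogonal_transpose_row_eq {s : Set n} {v : n → n → ℝ}
    (hv : ∀ i ∈ s, ∀ j ∈ s, v i ⬝ᵥ v j = if i = j then 1 else 0) :
    ∃ U : Matrix n n ℝ, Uᵀ * U = 1 ∧ U * Uᵀ = 1 ∧ ∀ j ∈ s, Uᵀ j = v j := by
  have hon : Orthonormal ℝ (s.domRestrict fun j => WithLp.toLp 2 (v j)) := by
    rw [orthonormal_iff_ite]
    rintro ⟨i, hi⟩ ⟨j, hj⟩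
    simpa [EuclideanSpace.inner_eq_star_dotProduct, dotProduct_comm, Subtype.ext_iff] using
      hv i hi j hj
  obtain ⟨b, hb⟩ := hon.exists_orthonormalBasis_extension_of_card_eq (by simp)
  have hU := (EuclideanSpace.basisFun n ℝ).toMatrix_orthonormalBasis_mem_unitary b
  refine ⟨(EuclideanSpace.basisFun n ℝ).toBasis.toMatrix b, ?_, ?_, fun j hj => ?_⟩
  · simpa [star_eq_conjTranspose] using Matrix.mem_unitaryGroup_iff'.1 hU
  · simpa [star_eq_conjTranspose] using Matrix.mem_unitaryGroup_iff.1 hU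
  · ext i
    simp [Module.Basis.toMatrix_apply, hb j hj]

theorem exists_svd (B : Matrix n n ℝ) :
    ∃ (U V : Matrix n n ℝ) (σ : n → ℝ), Uᵀ * U = 1 ∧ U * Uᵀ = 1 ∧ Vᵀ * V = 1 ∧ V * Vᵀ = 1 ∧
      (∀ j, 0 ≤ σ j) ∧ B = V * diagonal σ * Uᵀ := by
  obtain ⟨U, ev, hU, hU', hBU⟩ :=
    (isSymm_transpose_mul_self B).exists_orthogonal_mul_eq_mul_diagonal
  have hdot : ∀ i j, (B *ᵥ Uᵀ i) ⬝ᵥ (B *ᵥ Uᵀ j) = if i = j then ev j else 0 := fun i j => by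
    rw [dotProduct_mulVec_mulVec, mulVec_transpose_apply_of_mul_eq_mul_diagonal hBU,
      dotProduct_smul, transpose_row_dotProduct_of_transpose_mul_self hU, smul_eq_mul, mul_ite,
      mul_one, mul_zero]
  have hev : ∀ j, 0 ≤ ev j := fun j => by
    simpa [hdot] using dotProduct_self_star_nonneg (B *ᵥ Uᵀ j)
  set σ := fun j => Real.sqrt (ev j)
  have hσ : ∀ j, σ j * σ j = ev j := fun j => Real.mul_self_sqrt (hev j)
  obtain ⟨V, hV, hV', hVB⟩ := exists_orthogonal_transpose_row_eq (s := {j | ev j ≠ 0})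
    (v := fun j => (σ j)⁻¹ • B *ᵥ Uᵀ j) fun i hi j hj => by
      have hσi : σ i ≠ 0 := fun h => hi (by rw [← hσ, h, zero_mul])
      simp only [smul_dotProduct, dotProduct_smul, hdot, smul_eq_mul]
      split_ifs with hij
      · subst hij
        rw [← hσ]
        field_simp
      · simp
  have hBUV : B * U = V * diagonal σ := by
    ext i j
    rw [mul_diagonal]
    change (B *ᵥ Uᵀ j) i = Vᵀ j i * σ j
    by_cases hj : ev j = 0
    · have hz : B *ᵥ Uᵀ j = 0 := dotProduct_self_eq_zero.1 (by rw [hdot, if_pos rfl, hj])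
      simp [hz, σ, hj]
    · have hσj : σ j ≠ 0 := fun h => hj (by rw [← hσ, h, zero_mul])
      rw [hVB j hj, Pi.smul_apply, smul_eq_mul]
      field_simp
  refine ⟨U, V, σ, hU, hU', hV, hV', fun j => Real.sqrt_nonneg _, ?_⟩
  rw [← hBUV, Matrix.mul_assoc, hU', Matrix.mul_one]

theorem trace_mul_diagonal_mul_transpose {U : Matrix n n ℝ} (hU : Uᵀ * U = 1) (σ : n → ℝ) :
    (U * diagonal σ * Uᵀ).trace = ∑ j, σ j := by
  rw [trace_mul_comm, ← Matrix.mul_assoc, hU, Matrix.one_mul, trace_diagonal]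

theorem exists_orthogonal_trace_transpose_mul_self_le {B : Matrix n n ℝ}
    (hB : ∀ x, (B *ᵥ x) ⬝ᵥ (B *ᵥ x) ≤ x ⬝ᵥ x) :
    ∃ O : Matrix n n ℝ, Oᵀ * O = 1 ∧ O * Oᵀ = 1 ∧ (Bᵀ * B).trace ≤ (Oᵀ * B).trace := by
  obtain ⟨U, V, σ, hU, hU', hV, hV', hσ, rfl⟩ := exists_svd B
  have hσ1 : ∀ j, σ j ≤ 1 := fun j => by
    have h := hB (U *ᵥ Pi.single j 1)
    simp only [mulVec_mulVec, Matrix.mul_assoc, hU, Matrix.mul_one] at h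
    rw [← mulVec_mulVec, diagonal_mulVec_single, dotProduct_self_mulVec_of_transpose_mul_self hV,
      dotProduct_self_mulVec_of_transpose_mul_self hU] at h
    simp only [dotProduct_single, Pi.single_eq_same, mul_one] at h
    nlinarith [hσ j]
  refine ⟨V * Uᵀ, ?_, ?_, ?_⟩
  · rw [transpose_mul, transpose_transpose, Matrix.mul_assoc, ← Matrix.mul_assoc Vᵀ, hV,
      Matrix.one_mul, hU']
  · rw [transpose_mul, transpose_transpose, Matrix.mul_assoc, ← Matrix.mul_assoc Uᵀ, hU,
      Matrix.one_mul, hV']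
  · have hBB : (V * diagonal σ * Uᵀ)ᵀ * (V * diagonal σ * Uᵀ) = U * diagonal (σ * σ) * Uᵀ := by
      simp only [transpose_mul, transpose_transpose, diagonal_transpose, Matrix.mul_assoc]
      rw [← Matrix.mul_assoc Vᵀ, hV, Matrix.one_mul, ← Matrix.mul_assoc (diagonal σ),
        diagonal_mul_diagonal']
      rfl
    have hOB : (V * Uᵀ)ᵀ * (V * diagonal σ * Uᵀ) = U * diagonal σ * Uᵀ := by
      simp only [transpose_mul, transpose_transpose, Matrix.mul_assoc]
      rw [← Matrix.mul_assoc Vᵀ, hV, Matrix.one_mul]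
    rw [hBB, hOB, trace_mul_diagonal_mul_transpose hU, trace_mul_diagonal_mul_transpose hU]
    exact Finset.sum_le_sum fun j _ => mul_le_of_le_one_left (hσ j) (hσ1 j)

end Procrustes

theorem exists_orthogonal_frobSq_sub_mul_le {d k : ℕ} {Q Q' : Matrix (Fin d) (Fin k) ℝ}
    (hQ : Qᵀ * Q = 1) (hQ' : Q'ᵀ * Q' = 1) :
    ∃ O : Matrix (Fin k) (Fin k) ℝ, Oᵀ * O = 1 ∧ O * Oᵀ = 1 ∧
      frobSq (Q' - Q * O) ≤ 2 * frobSq ((1 - Q * Qᵀ) * Q') := by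
  obtain ⟨O, hO, hO', htr⟩ := exists_orthogonal_trace_transpose_mul_self_le (B := Qᵀ * Q')
    fun x => by
      rw [← mulVec_mulVec, ← dotProduct_self_mulVec_of_transpose_mul_self hQ' x]
      exact dotProduct_self_transpose_mulVec_le hQ _
  refine ⟨O, hO, hO', ?_⟩
  have hQO : (Q * O)ᵀ * (Q * O) = 1 := by
    rw [transpose_mul, Matrix.mul_assoc, ← Matrix.mul_assoc Qᵀ, hQ, Matrix.one_mul, hO]
  have hlhs : frobSq (Q' - Q * O) = 2 * k - 2 * (Oᵀ * (Qᵀ * Q')).trace := by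
    rw [frobSq_sub_of_transpose_mul_self hQ' hQO, ← trace_transpose]
    simp only [transpose_mul, transpose_transpose, Matrix.mul_assoc]
  have hrhs : frobSq ((1 - Q * Qᵀ) * Q') = k - ((Qᵀ * Q')ᵀ * (Qᵀ * Q')).trace := by
    have hP : (1 - Q * Qᵀ)ᵀ * (1 - Q * Qᵀ) = 1 - Q * Qᵀ := by
      rw [transpose_sub, transpose_one, transpose_mul, transpose_transpose, Matrix.sub_mul,
        Matrix.one_mul, Matrix.mul_sub, Matrix.mul_one, Matrix.mul_assoc, ← Matrix.mul_assoc Qᵀ,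
        hQ, Matrix.one_mul, sub_self, sub_zero]
    rw [frobSq_eq_trace, transpose_mul, Matrix.mul_assoc, ← Matrix.mul_assoc _ _ Q', hP,
      Matrix.sub_mul, Matrix.one_mul, Matrix.mul_sub, hQ', trace_sub, trace_one, Fintype.card_fin]
    simp only [transpose_mul, transpose_transpose, Matrix.mul_assoc]
  rw [hlhs, hrhs]
  linarith

/-- Modified Davis–Kahan sin Θ lemma: if `A` is symmetric, `Â = A + H` is a symmetric
perturbation, `Q` (resp. `Q̂`) has orthonormal columns spanning the span of eigenvectors of
`A` (resp. `Â`) with eigenvalues in `S`, and `δ > 0` is a lower bound on `|λ − s|` over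
eigenvalues `λ ∉ S` of `A` and `s ∈ S`, then there is an orthogonal `O` with
`‖Q̂ − QO‖_F ≤ √(2k)·‖H‖_op/δ`. -/
theorem stmt8 {d k : ℕ} (S : Set ℝ) (A H : Matrix (Fin d) (Fin d) ℝ)
    (hA : A.IsSymm) (hH : H.IsSymm)
    (Q Qh : Matrix (Fin d) (Fin k) ℝ)
    (hQ : Qᵀ * Q = 1) (hQh : Qhᵀ * Qh = 1)
    (hQspan : LinearMap.range (Matrix.mulVecLin Q) =
      ⨆ μ ∈ S, Module.End.eigenspace (Matrix.mulVecLin A) μ)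
    (hQhspan : LinearMap.range (Matrix.mulVecLin Qh) =
      ⨆ μ ∈ S, Module.End.eigenspace (Matrix.mulVecLin (A + H)) μ)
    (δ : ℝ) (hδ : 0 < δ)
    (hgap : ∀ μ : ℝ, Module.End.HasEigenvalue (Matrix.mulVecLin A) μ → μ ∉ S →
      ∀ s ∈ S, δ ≤ |μ - s|) :
    ∃ O : Matrix (Fin k) (Fin k) ℝ, Oᵀ * O = 1 ∧ O * Oᵀ = 1 ∧
      Real.sqrt (frobSq (Qh - Q * O)) ≤ Real.sqrt (2 * k) * opNorm H / δ := by
  set M := Qhᵀ * (A + H) * Qh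
  have hM : M.IsSymm := by
    simp only [M, IsSymm, transpose_mul, transpose_transpose, (hA.add hH).eq, Matrix.mul_assoc]
  have hHQh : Qh * M - A * Qh = H * Qh := by
    rw [← mul_eq_mul_transpose_mul_mul_of_range_eq hQh hQhspan, Matrix.add_mul,
      add_sub_cancel_left]
  have hsin : δ ^ 2 * frobSq ((1 - Q * Qᵀ) * Qh) ≤ k * opNorm H ^ 2 :=
    (sq_mul_frobSq_one_sub_mul_transpose_mul_le hA hQ hQspan hM
      (fun _ => mem_of_hasEigenvalue_transpose_mul_mul hQh hQhspan) hδ.le hgap Qh).trans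
      (hHQh ▸ frobSq_mul_le_of_transpose_mul_self H hQh)
  obtain ⟨O, hO, hO', hOQ⟩ := exists_orthogonal_frobSq_sub_mul_le hQ hQh
  refine ⟨O, hO, hO', ?_⟩
  have hbound : frobSq ((1 - Q * Qᵀ) * Qh) ≤ k * (opNorm H / δ) ^ 2 := by
    rw [div_pow, ← mul_div_assoc, le_div_iff₀ (by positivity)]
    linarith
  calc Real.sqrt (frobSq (Qh - Q * O)) ≤ Real.sqrt (2 * k * (opNorm H / δ) ^ 2) :=
        Real.sqrt_le_sqrt (by linarith)
    _ = Real.sqrt (2 * k) * opNorm H / δ := by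
        rw [Real.sqrt_mul (by positivity), Real.sqrt_sq (div_nonneg (opNorm_nonneg H) hδ.le),
          mul_div_assoc]
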